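/- arXiv:2304.02987 — 3 statements merged into one kernel-verified Lean document; each statement's English description precedes it below -/
import Mathlib

section
/- Along any solution a(t) of the reduced dynamical law ȧ_j = -(d_j/π) 𝕁 ∇_{a_j} W_{𝕋}(a), the vector-valued quantity q(a(t)) = 𝕁 Σ_{m=1}^{2N} d_m a_m(t) is constant in time. -/
/-- Along any solution of the reduced dynamical law
`ȧ_j = 2𝕁 Σ_{k≠j} d_k ∇F(a_j - a_k) - 4π 𝕁 Σ_m d_m a_m`, with
`d₁ = … = d_N = 1`, `d_{N+1} = … = d_{2N} = -1` and `F` even, the quantity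
`q(a(t)) = 𝕁 Σ_m d_m a_m(t)` is constant. Here `𝕁 (v₁,v₂) = (v₂,-v₁)`. -/
theorem stmt_9 (N : ℕ) (hN : 0 < N) (F : ℝ × ℝ → ℝ)
    (hFeven : ∀ x : ℝ × ℝ, F (-x) = F x)
    (hFdiff : ∀ x : ℝ × ℝ, x ≠ 0 → ContDiffAt ℝ (⊤ : ℕ∞) F x)
    (Jmat : ℝ × ℝ → ℝ × ℝ) (hJ : Jmat = fun v => (v.2, -v.1))
    (gF : ℝ × ℝ → ℝ × ℝ)
    (hgF : gF = fun x => (fderiv ℝ F x ((1:ℝ), (0:ℝ)), fderiv ℝ F x ((0:ℝ), (1:ℝ))))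
    (d : Fin (2 * N) → ℝ) (hd : ∀ j : Fin (2 * N), d j = if (j : ℕ) < N then 1 else -1)
    (T : ℝ) (hT : 0 < T) (a : ℝ → Fin (2 * N) → ℝ × ℝ)
    (hsep : ∀ t ∈ Set.Ico (0:ℝ) T, ∀ j k, j ≠ k → a t j ≠ a t k)
    (hODE : ∀ t ∈ Set.Ico (0:ℝ) T, ∀ j,
      HasDerivAt (fun s => a s j)
        ((2:ℝ) • Jmat (∑ k, if k ≠ j then d k • gF (a t j - a t k) else 0)
          - (4 * Real.pi) • Jmat (∑ m, d m • a t m)) t)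
    (t : ℝ) (ht : t ∈ Set.Ico (0:ℝ) T) :
    Jmat (∑ m, d m • a t m) = Jmat (∑ m, d m • a 0 m) := by
  -- the sum of the degrees vanishes
  have hdsum : (∑ m, d m) = 0 := by
    simp only [hd]
    rw [Fin.sum_univ_eq_sum_range (fun i => if i < N then (1:ℝ) else -1) (2*N)]
    rw [Finset.range_eq_Ico,
      ← Finset.sum_Ico_consecutive (fun i => if i < N then (1:ℝ) else -1)
        (Nat.zero_le N) (by omega : N ≤ 2*N)]
    have h1 : (∑ i ∈ Finset.Ico 0 N, (if i < N then (1:ℝ) else -1)) = N := by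
      rw [Finset.sum_congr rfl (fun i hi => if_pos (Finset.mem_Ico.1 hi).2)]
      simp
    have h2 : (∑ i ∈ Finset.Ico N (2*N), (if i < N then (1:ℝ) else -1)) = -(N:ℝ) := by
      rw [Finset.sum_congr rfl
        (fun i hi => if_neg (by have := (Finset.mem_Ico.1 hi).1; omega))]
      simp [Nat.card_Ico]
      ring_nf
      rw [Nat.sub_eq_iff_eq_add (by omega)]
      ring
    rw [h1, h2]; ring
  -- Jmat as a linear map
  set J' : (ℝ × ℝ) →ₗ[ℝ] ℝ × ℝ :=
    (LinearMap.snd ℝ ℝ ℝ).prod (-(LinearMap.fst ℝ ℝ ℝ)) with hJ'def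
  have hJ' : ∀ v, Jmat v = J' v := by
    intro v; simp [hJ, hJ'def]
  -- gF is odd away from the origin
  have hodd : ∀ x : ℝ × ℝ, x ≠ 0 → gF (-x) = -gF x := by
    intro x hx
    have hdx : DifferentiableAt ℝ F (-x) :=
      (hFdiff (-x) (neg_ne_zero.2 hx)).differentiableAt (by simp)
    have hneg : HasFDerivAt (fun y : ℝ × ℝ => -y)
        (-(ContinuousLinearMap.id ℝ (ℝ × ℝ))) x := (hasFDerivAt_id x).neg
    have hcomp : HasFDerivAt (fun y : ℝ × ℝ => F (-y))
        ((fderiv ℝ F (-x)).comp (-(ContinuousLinearMap.id ℝ (ℝ × ℝ)))) x :=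
      (hdx.hasFDerivAt).comp x hneg
    have heq : (fun y : ℝ × ℝ => F (-y)) = F := funext hFeven
    rw [heq] at hcomp
    have hfd : fderiv ℝ F x = (fderiv ℝ F (-x)).comp
        (-(ContinuousLinearMap.id ℝ (ℝ × ℝ))) := hcomp.fderiv
    have hval : ∀ v : ℝ × ℝ, fderiv ℝ F (-x) v = -(fderiv ℝ F x v) := by
      intro v
      rw [hfd]
      simp
    simp [hgF, hval, Prod.ext_iff]
  -- the conserved quantity and its derivative
  set g : ℝ → ℝ × ℝ := fun s => ∑ m, d m • a s m with hg
  have hgderiv : ∀ s ∈ Set.Ico (0:ℝ) T, HasDerivAt g 0 s := by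
    intro s hs
    have h1 : HasDerivAt g
        (∑ m, d m • ((2:ℝ) • Jmat (∑ k, if k ≠ m then d k • gF (a s m - a s k) else 0)
          - (4 * Real.pi) • Jmat (∑ m', d m' • a s m'))) s := by
      apply HasDerivAt.fun_sum
      intro m _
      exact (hODE s hs m).const_smul (d m)
    convert h1 using 1
    symm
    have hsplit : (∑ m, d m • ((2:ℝ) • Jmat (∑ k, if k ≠ m then d k • gF (a s m - a s k) else 0)
          - (4 * Real.pi) • Jmat (∑ m', d m' • a s m')))
        = (2:ℝ) • (∑ m, d m • Jmat (∑ k, if k ≠ m then d k • gF (a s m - a s k) else 0))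
          - (4 * Real.pi) • ((∑ m, d m) • Jmat (∑ m', d m' • a s m')) := by
      rw [Finset.sum_smul, Finset.smul_sum, Finset.smul_sum, ← Finset.sum_sub_distrib]
      apply Finset.sum_congr rfl
      intro m _
      rw [smul_sub]
      congr 1 <;> rw [smul_comm]
    rw [hsplit, hdsum, zero_smul, smul_zero, sub_zero]
    -- the remaining double sum vanishes by antisymmetry
    have hinner : ∀ m, d m • Jmat (∑ k, if k ≠ m then d k • gF (a s m - a s k) else 0)
        = ∑ k, (if k ≠ m then (d m * d k) • J' (gF (a s m - a s k)) else 0) := by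
      intro m
      rw [hJ', map_sum, Finset.smul_sum]
      apply Finset.sum_congr rfl
      intro k _
      by_cases hkm : k ≠ m
      · simp [hkm, smul_smul]
      · simp [hkm]
    simp only [hinner]
    set f : Fin (2*N) → Fin (2*N) → ℝ × ℝ :=
      fun m k => if k ≠ m then (d m * d k) • J' (gF (a s m - a s k)) else 0 with hf
    have hanti : ∀ m k, f m k = - f k m := by
      intro m k
      by_cases hkm : k = m
      · simp [hf, hkm]
      · have hne : a s m ≠ a s k := hsep s hs m k (Ne.symm hkm)
        have hsub : a s m - a s k ≠ 0 := sub_ne_zero.2 hne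
        have h1 : a s k - a s m = -(a s m - a s k) := by abel
        simp only [hf]
        rw [if_pos hkm, if_pos (fun h => hkm h.symm), h1, hodd _ hsub,
          map_neg, smul_neg, neg_neg, mul_comm (d k) (d m)]
    have hS : (∑ m, ∑ k, f m k) = -(∑ m, ∑ k, f m k) := by
      conv_lhs => rw [Finset.sum_comm]
      rw [← Finset.sum_neg_distrib]
      apply Finset.sum_congr rfl
      intro k _
      rw [← Finset.sum_neg_distrib]
      apply Finset.sum_congr rfl
      intro m _
      exact hanti m k
    have h2S : (2:ℝ) • (∑ m, ∑ k, f m k) = 0 := by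
      rw [two_smul]
      nth_rewrite 2 [hS]
      simp
    have hzero : (∑ m, ∑ k, f m k) = 0 := by
      have := smul_eq_zero.1 h2S
      rcases this with h | h
      · norm_num at h
      · exact h
    rw [hzero, smul_zero]
  -- constancy on [0, t]
  have hcont : ContinuousOn g (Set.Icc 0 t) := by
    intro x hx
    have hxm : x ∈ Set.Ico (0:ℝ) T :=
      ⟨hx.1, lt_of_le_of_lt hx.2 ht.2⟩
    exact ((hgderiv x hxm).continuousAt).continuousWithinAt
  have hder : ∀ x ∈ Set.Ico (0:ℝ) t, HasDerivWithinAt g 0 (Set.Ici x) x := by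
    intro x hx
    have hxm : x ∈ Set.Ico (0:ℝ) T := ⟨hx.1, lt_trans hx.2 ht.2⟩
    exact (hgderiv x hxm).hasDerivWithinAt
  have hconst := constant_of_has_deriv_right_zero hcont hder t
    (Set.mem_Icc.2 ⟨ht.1, le_refl t⟩)
  exact congrArg Jmat hconst
end

section
/- Along any solution a(t) of the reduced dynamical law ȧ_j = 2𝕁 Σ_{k≠j} d_k ∇F(a_j - a_k) - 4π q(a), the quantity ξ(a(t)) = (1/4) Σ_{j≠k} d_j d_k |a_j(t) - a_k(t)|² is constant in time, because ξ(a) = -(1/4)|q(a)|² + constant when Σ_j d_j = 0, and q(a(t)) is conserved. -/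
/-!
Since `F` is even, `∇F` is odd, so in `Σ_j d_j ȧ_j` the pair interactions cancel in pairs, and the
drift term contributes `(Σ_j d_j) · 4π 𝕁 q = 0`: the weighted centre `p = Σ_j d_j a_j` is conserved.
Expanding the squares and using `Σ_j d_j = 0` gives `ξ(a) = -|p|² / 2`, hence `ξ` is conserved too.
-/

open Finset

theorem Function.Even.fderiv {𝕜 E F : Type*} [NontriviallyNormedField 𝕜] [NormedAddCommGroup E]
    [NormedSpace 𝕜 E] [NormedAddCommGroup F] [NormedSpace 𝕜 F] {f : E → F} (hf : f.Even) :
    (fderiv 𝕜 f).Odd := fun x => by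
  have h := fderiv_comp_smul (f := f) (x := x) (-1 : 𝕜)
  simp only [neg_smul, one_smul, hf.eq] at h
  rw [h, neg_neg]

theorem Finset.sum_sum_eq_zero_of_antisymm {ι M : Type*} [AddCommGroup M] [IsAddTorsionFree M]
    (s : Finset ι) (f : ι → ι → M) (hf : ∀ i j, f i j = -f j i) :
    ∑ i ∈ s, ∑ j ∈ s, f i j = 0 := by
  refine self_eq_neg.mp ?_
  calc ∑ i ∈ s, ∑ j ∈ s, f i j = -∑ i ∈ s, ∑ j ∈ s, f j i := by
        simp only [← sum_neg_distrib, ← hf]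
    _ = -∑ i ∈ s, ∑ j ∈ s, f i j := by rw [sum_comm]

theorem Finset.sum_sum_mul_mul_sub_sq {ι R : Type*} [CommRing R] (s : Finset ι) (d x : ι → R)
    (hd : ∑ j ∈ s, d j = 0) :
    ∑ j ∈ s, ∑ k ∈ s, d j * d k * (x j - x k) ^ 2 = -2 * (∑ j ∈ s, d j * x j) ^ 2 := by
  calc ∑ j ∈ s, ∑ k ∈ s, d j * d k * (x j - x k) ^ 2
      = (∑ j ∈ s, d j * x j ^ 2) * (∑ k ∈ s, d k) + (∑ j ∈ s, d j) * (∑ k ∈ s, d k * x k ^ 2)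
        - 2 * ((∑ j ∈ s, d j * x j) * (∑ k ∈ s, d k * x k)) := by
        rw [sum_mul_sum, sum_mul_sum, sum_mul_sum, mul_sum, ← sum_add_distrib, ← sum_sub_distrib]
        refine sum_congr rfl fun j _ => ?_
        rw [mul_sum, ← sum_add_distrib, ← sum_sub_distrib]
        exact sum_congr rfl fun k _ => by ring
    _ = -2 * (∑ j ∈ s, d j * x j) ^ 2 := by rw [hd]; ring

section PointVortices

variable {ι R M : Type*} [Fintype ι] [DecidableEq ι] [CommRing R] [AddCommGroup M] [Module R M]

def pairInteraction (d : ι → R) (g : M → M) (x : ι → M) (j : ι) : M :=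
  ∑ k, if k ≠ j then d k • g (x j - x k) else 0

variable [IsAddTorsionFree M]

theorem sum_smul_pairInteraction_eq_zero {g : M → M} (hg : g.Odd) (d : ι → R) (x : ι → M) :
    ∑ j, d j • pairInteraction d g x j = 0 := by
  simp only [pairInteraction, smul_sum]
  refine sum_sum_eq_zero_of_antisymm _ _ fun j k => ?_
  rcases eq_or_ne k j with rfl | hkj
  · simp
  · rw [if_pos hkj, if_pos hkj.symm, ← neg_sub, hg.eq, smul_neg, smul_neg, smul_smul, smul_smul,
      mul_comm]

theorem sum_smul_map_pairInteraction_sub_eq_zero {N : Type*} [AddCommGroup N] [Module R N]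
    (L : M →ₗ[R] N) {g : M → M} (hg : g.Odd) {d : ι → R} (hd : ∑ j, d j = 0) (α : R) (p : N)
    (x : ι → M) : ∑ j, d j • (α • L (pairInteraction d g x j) - p) = 0 := by
  simp only [smul_sub, sum_sub_distrib, ← sum_smul, hd, zero_smul, sub_zero, smul_comm (d _) α,
    ← smul_sum, ← map_smul, ← map_sum, sum_smul_pairInteraction_eq_zero hg, map_zero, smul_zero]

end PointVortices

theorem eq_of_hasDerivAt_eq_zero_of_mem_Ico {E : Type*} [NormedAddCommGroup E] [NormedSpace ℝ E]
    {f : ℝ → E} {a b t : ℝ} (hf : ∀ s ∈ Set.Ico a b, HasDerivAt f 0 s) (ht : t ∈ Set.Ico a b) :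
    f t = f a := by
  have hsub : Set.Icc a t ⊆ Set.Ico a b := Set.Icc_subset_Ico_right ht.2
  exact constant_of_has_deriv_right_zero
    (fun s hs => (hf s (hsub hs)).continuousAt.continuousWithinAt)
    (fun s hs => (hf s (hsub (Set.Ico_subset_Icc_self hs))).hasDerivWithinAt) t ⟨ht.1, le_rfl⟩

theorem sum_sum_weighted_sq_dist_eq_neg_two_mul_sq_sum {ι : Type*} [Fintype ι] [DecidableEq ι]
    {d : ι → ℝ} (hd : ∑ j, d j = 0) (b : ι → ℝ × ℝ) :
    ∑ j, ∑ k, (if j ≠ k then d j * d k * ((b j - b k).1 ^ 2 + (b j - b k).2 ^ 2) else 0)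
      = -2 * ((∑ m, d m • b m).1 ^ 2 + (∑ m, d m • b m).2 ^ 2) := by
  have hdiag : ∀ j k, (if j ≠ k then d j * d k * ((b j - b k).1 ^ 2 + (b j - b k).2 ^ 2) else 0)
      = d j * d k * ((b j).1 - (b k).1) ^ 2 + d j * d k * ((b j).2 - (b k).2) ^ 2 := by
    intro j k
    rcases eq_or_ne j k with rfl | hjk
    · simp
    · rw [if_pos hjk, Prod.fst_sub, Prod.snd_sub]
      ring
  simp only [hdiag, sum_add_distrib, sum_sum_mul_mul_sub_sq _ _ _ hd, Prod.fst_sum, Prod.snd_sum,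
    Prod.smul_fst, Prod.smul_snd, smul_eq_mul]
  ring

theorem stmt_10_general (N : ℕ) (F : ℝ × ℝ → ℝ)
    (hFeven : ∀ x : ℝ × ℝ, F (-x) = F x)
    (Jmat : ℝ × ℝ → ℝ × ℝ) (hJ : Jmat = fun v => (v.2, -v.1))
    (gF : ℝ × ℝ → ℝ × ℝ)
    (hgF : gF = fun x => (fderiv ℝ F x ((1:ℝ), (0:ℝ)), fderiv ℝ F x ((0:ℝ), (1:ℝ))))
    (d : Fin (2 * N) → ℝ) (hdsum : ∑ j, d j = 0)
    (T : ℝ) (a : ℝ → Fin (2 * N) → ℝ × ℝ)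
    (hODE : ∀ t ∈ Set.Ico (0:ℝ) T, ∀ j,
      HasDerivAt (fun s => a s j)
        ((2:ℝ) • Jmat (∑ k, if k ≠ j then d k • gF (a t j - a t k) else 0)
          - (4 * Real.pi) • Jmat (∑ m, d m • a t m)) t)
    (ξ : (Fin (2 * N) → ℝ × ℝ) → ℝ)
    (hξ : ξ = fun b => (1 / 4) * ∑ j, ∑ k,
      (if j ≠ k then d j * d k * ((b j - b k).1 ^ 2 + (b j - b k).2 ^ 2) else 0))
    (t : ℝ) (ht : t ∈ Set.Ico (0:ℝ) T) :
    ξ (a t) = ξ (a 0) := by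
  replace hJ : Jmat = ⇑((LinearMap.snd ℝ ℝ ℝ).prod (-LinearMap.fst ℝ ℝ ℝ)) := hJ
  subst hJ
  have hgF_odd : gF.Odd := fun x => by
    simp only [hgF, Function.Even.fderiv (𝕜 := ℝ) hFeven x, neg_apply, Prod.neg_mk]
  have hmomentum : ∀ s ∈ Set.Ico (0:ℝ) T, HasDerivAt (fun s => ∑ m, d m • a s m) 0 s := by
    intro s hs
    rw [← sum_smul_map_pairInteraction_sub_eq_zero _ hgF_odd hdsum 2 _ (a s)]
    exact HasDerivAt.fun_sum fun m _ => (hODE s hs m).fun_const_smul (d m)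
  have hconst := eq_of_hasDerivAt_eq_zero_of_mem_Ico hmomentum ht
  simp only [hξ, sum_sum_weighted_sq_dist_eq_neg_two_mul_sq_sum hdsum]
  rw [hconst]

/-- Along any solution of
`ȧ_j = 2𝕁 Σ_{k≠j} d_k ∇F(a_j - a_k) - 4π q(a)` with `q(a) = 𝕁 Σ_m d_m a_m`,
`Σ_j d_j = 0` and `F` even `C¹`, the quantity
`ξ(a(t)) = (1/4) Σ_{j≠k} d_j d_k |a_j(t) - a_k(t)|²` is constant in time. -/
theorem stmt_10 (N : ℕ) (hN : 0 < N) (F : ℝ × ℝ → ℝ)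
    (hFeven : ∀ x : ℝ × ℝ, F (-x) = F x)
    (hFdiff : ∀ x : ℝ × ℝ, x ≠ 0 → DifferentiableAt ℝ F x)
    (Jmat : ℝ × ℝ → ℝ × ℝ) (hJ : Jmat = fun v => (v.2, -v.1))
    (gF : ℝ × ℝ → ℝ × ℝ)
    (hgF : gF = fun x => (fderiv ℝ F x ((1:ℝ), (0:ℝ)), fderiv ℝ F x ((0:ℝ), (1:ℝ))))
    (d : Fin (2 * N) → ℝ) (hd : ∀ j, d j = 1 ∨ d j = -1) (hdsum : ∑ j, d j = 0)
    (T : ℝ) (hT : 0 < T) (a : ℝ → Fin (2 * N) → ℝ × ℝ)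
    (hsep : ∀ t ∈ Set.Ico (0:ℝ) T, ∀ j k, j ≠ k → a t j ≠ a t k)
    (hODE : ∀ t ∈ Set.Ico (0:ℝ) T, ∀ j,
      HasDerivAt (fun s => a s j)
        ((2:ℝ) • Jmat (∑ k, if k ≠ j then d k • gF (a t j - a t k) else 0)
          - (4 * Real.pi) • Jmat (∑ m, d m • a t m)) t)
    (ξ : (Fin (2 * N) → ℝ × ℝ) → ℝ)
    (hξ : ξ = fun b => (1 / 4) * ∑ j, ∑ k,
      (if j ≠ k then d j * d k * ((b j - b k).1 ^ 2 + (b j - b k).2 ^ 2) else 0))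
    (t : ℝ) (ht : t ∈ Set.Ico (0:ℝ) T) :
    ξ (a t) = ξ (a 0) :=
  stmt_10_general N F hFeven Jmat hJ gF hgF d hdsum T a hODE ξ hξ t ht
end

section
/- Suppose the ODE system in (α, β): α̇ = 2(-∂_y F(α-β, β-α) + ∂_y F(2α, 2β) - ∂_y F(α+β, α+β)), β̇ = 2(∂_x F(α-β, β-α) - ∂_x F(2α, 2β) + ∂_x F(α+β, α+β)) has a C¹ solution with initial data (α₀, β₀). Then the four paths a₁ = c + (α,β), a₂ = c - (α,β), a₃ = c + (β,α), a₄ = c - (β,α) with c = (0.5, 0.5) solve the reduced dynamical law ȧ_j = 2𝕁 Σ_{k≠j} d_k ∇F(a_j - a_k) - 4π𝕁 Σ_m d_m a_m with degrees d₁ = d₂ = +1, d₃ = d₄ = -1 and initial data obtained by setting (α,β) = (α₀,β₀). -/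
open Filter Topology

/-! Since `F` is even and invariant under `(x, y) ↦ (y, x)`, off the origin its gradient is odd
and commutes with that swap. Writing `u = (α, β)`, the ansatz is `a = c ± u, c ± u.swap` with
`∑ d_m a_m = 0`, so the law at `a₁` is exactly the given ODE `u̇ = V(u)`, where
`V = quadVelocity (grad F)`. The symmetries of the gradient give `V(-u) = -V(u)` and
`V(u.swap) = -V(u).swap`: the reflection `u ↦ -u` exchanges `a₁ ↔ a₂`, and the swap exchanges
`a₁ ↔ a₃` while reversing orientation, which the opposite degrees compensate. -/

theorem fderiv_eq_comp_of_comp_eventuallyEq {𝕜 E G : Type*} [NontriviallyNormedField 𝕜]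
    [NormedAddCommGroup E] [NormedSpace 𝕜 E] [NormedAddCommGroup G] [NormedSpace 𝕜 G]
    {f : E → G} (L : E →L[𝕜] E) {x : E} (hf : DifferentiableAt 𝕜 f (L x))
    (h : f ∘ L =ᶠ[𝓝 x] f) : fderiv 𝕜 f x = (fderiv 𝕜 f (L x)).comp L := by
  rw [← h.fderiv_eq, fderiv_comp x hf L.differentiableAt, L.fderiv]

theorem Prod.swap_ne_zero {M N : Type*} [Zero M] [Zero N] {p : M × N} (hp : p ≠ 0) :
    p.swap ≠ 0 :=
  fun h => hp (Prod.swap_inj (q := 0) |>.1 h)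

theorem HasDerivAt.prodSwap {𝕜 E G : Type*} [NontriviallyNormedField 𝕜] [NormedAddCommGroup E]
    [NormedSpace 𝕜 E] [NormedAddCommGroup G] [NormedSpace 𝕜 G] {f : 𝕜 → E × G} {f' : E × G}
    {x : 𝕜} (h : HasDerivAt f f' x) : HasDerivAt (fun s => (f s).swap) f'.swap x :=
  (ContinuousLinearEquiv.prodComm 𝕜 E G).hasFDerivAt.comp_hasDerivAt x h

namespace FourVortex

theorem neg_eq_of_reflections {F : ℝ × ℝ → ℝ}
    (h₁ : ∀ x y : ℝ, (x, y) ≠ (0, 0) → F (-x, y) = F (x, y))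
    (h₂ : ∀ x y : ℝ, (x, y) ≠ (0, 0) → F (x, -y) = F (x, y)) {p : ℝ × ℝ} (hp : p ≠ 0) :
    F (-p) = F p := by
  have hp' : (p.1, -p.2) ≠ (0, 0) := by simpa [Prod.ext_iff] using hp
  change F (-p.1, -p.2) = F (p.1, p.2)
  rw [h₁ _ _ hp', h₂ _ _ hp]

noncomputable def grad (F : ℝ × ℝ → ℝ) (x : ℝ × ℝ) : ℝ × ℝ :=
  (fderiv ℝ F x (1, 0), fderiv ℝ F x (0, 1))

def rot : ℝ × ℝ →ₗ[ℝ] ℝ × ℝ := (LinearMap.snd ℝ ℝ ℝ).prod (-LinearMap.fst ℝ ℝ ℝ)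

theorem rot_swap (v : ℝ × ℝ) : rot v.swap = -(rot v).swap := by
  simp [rot]

section grad

variable {F : ℝ × ℝ → ℝ} {v : ℝ × ℝ}

theorem grad_neg (heven : ∀ p ≠ 0, F (-p) = F p) (hF : DifferentiableAt ℝ F (-v)) (hv : v ≠ 0) :
    grad F (-v) = -grad F v := by
  have h : F ∘ (-ContinuousLinearMap.id ℝ _) =ᶠ[𝓝 v] F := by
    filter_upwards [isOpen_compl_singleton.mem_nhds hv] with p hp using heven p hp
  have := fderiv_eq_comp_of_comp_eventuallyEq _ hF h
  simp [grad, this]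

theorem grad_swap (hsymm : ∀ p ≠ 0, F p.swap = F p) (hF : DifferentiableAt ℝ F v.swap)
    (hv : v ≠ 0) : grad F v.swap = (grad F v).swap := by
  have h : F ∘ (ContinuousLinearEquiv.prodComm ℝ ℝ ℝ : ℝ × ℝ →L[ℝ] ℝ × ℝ) =ᶠ[𝓝 v] F := by
    filter_upwards [isOpen_compl_singleton.mem_nhds hv] with p hp using hsymm p hp
  have := fderiv_eq_comp_of_comp_eventuallyEq _ hF h
  simp [grad, this]

end grad

/-- The four vortices `c ± u`, `c ± u.swap` are pairwise distinct. -/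
def Nondegenerate (u : ℝ × ℝ) : Prop := u ≠ 0 ∧ u.1 ≠ u.2 ∧ u.1 + u.2 ≠ 0

namespace Nondegenerate

variable {u : ℝ × ℝ}

theorem swap (hu : Nondegenerate u) : Nondegenerate u.swap := by
  obtain ⟨h₀, h₁, h₂⟩ := hu
  exact ⟨Prod.swap_ne_zero h₀, h₁.symm, by simpa [add_comm] using h₂⟩

theorem ne_zero (hu : Nondegenerate u) : 2 • u ≠ 0 ∧ u - u.swap ≠ 0 ∧ u + u.swap ≠ 0 := by
  obtain ⟨h₀, h₁, h₂⟩ := hu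
  refine ⟨smul_ne_zero two_ne_zero h₀, fun h => h₁ ?_, fun h => h₂ (congrArg Prod.fst h)⟩
  simpa [sub_eq_zero] using congrArg Prod.fst h

end Nondegenerate

def quadVelocity (g : ℝ × ℝ → ℝ × ℝ) (u : ℝ × ℝ) : ℝ × ℝ :=
  (2 : ℝ) • rot (g (2 • u) - g (u - u.swap) - g (u + u.swap))

section quadVelocity

variable {g : ℝ × ℝ → ℝ × ℝ} {u : ℝ × ℝ}

theorem quadVelocity_neg (hodd : ∀ v ≠ 0, g (-v) = -g v) (hu : Nondegenerate u) :
    quadVelocity g (-u) = -quadVelocity g u := by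
  obtain ⟨h₁, h₂, h₃⟩ := hu.ne_zero
  have e₂ : -u - (-u).swap = -(u - u.swap) := by rw [Prod.swap_neg]; abel
  have e₃ : -u + (-u).swap = -(u + u.swap) := by rw [Prod.swap_neg]; abel
  rw [quadVelocity, quadVelocity, smul_neg, e₂, e₃, hodd _ h₁, hodd _ h₂, hodd _ h₃]
  simp only [map_sub, map_neg, smul_sub, smul_neg]
  abel

theorem quadVelocity_swap (hswap : ∀ v ≠ 0, g v.swap = (g v).swap) (hu : Nondegenerate u) :
    quadVelocity g u.swap = -(quadVelocity g u).swap := by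
  obtain ⟨h₁, h₂, h₃⟩ := hu.ne_zero
  have e₁ : 2 • u.swap = (2 • u).swap := rfl
  have e₂ : u.swap - u.swap.swap = (u - u.swap).swap := by simp
  have e₃ : u.swap + u.swap.swap = (u + u.swap).swap := by simp [add_comm]
  rw [quadVelocity, quadVelocity, e₁, e₂, e₃, hswap _ h₁, hswap _ h₂, hswap _ h₃,
    ← Prod.swap_sub, ← Prod.swap_sub, rot_swap, smul_neg]
  rfl

end quadVelocity

section reducedLaw

variable {g : ℝ × ℝ → ℝ × ℝ} (c u : ℝ × ℝ)

theorem ansatz_weighted_sum_eq_zero : c + u + (c - u) - (c + u.swap) - (c - u.swap) = 0 := by abel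

theorem reducedLaw_first :
    (2 : ℝ) • rot ((1 : ℝ) • g (c + u - (c - u)) + (-1 : ℝ) • g (c + u - (c + u.swap))
        + (-1 : ℝ) • g (c + u - (c - u.swap)))
      - (4 * Real.pi) • rot (c + u + (c - u) - (c + u.swap) - (c - u.swap))
      = quadVelocity g u := by
  rw [quadVelocity, ansatz_weighted_sum_eq_zero, show c + u - (c - u) = 2 • u by module,
    add_sub_add_left_eq_sub, add_sub_sub_cancel]
  simp only [map_zero, smul_zero, sub_zero, one_smul, neg_one_smul, ← sub_eq_add_neg]

variable {c u}

theorem reducedLaw_second (hodd : ∀ v ≠ 0, g (-v) = -g v) (hu : Nondegenerate u) :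
    (2 : ℝ) • rot ((1 : ℝ) • g (c - u - (c + u)) + (-1 : ℝ) • g (c - u - (c + u.swap))
        + (-1 : ℝ) • g (c - u - (c - u.swap)))
      - (4 * Real.pi) • rot (c + u + (c - u) - (c + u.swap) - (c - u.swap))
      = -quadVelocity g u := by
  rw [← quadVelocity_neg hodd hu, quadVelocity, ansatz_weighted_sum_eq_zero,
    show c - u - (c + u) = 2 • -u by module,
    show c - u - (c + u.swap) = -u + (-u).swap by rw [Prod.swap_neg]; abel,
    show c - u - (c - u.swap) = -u - (-u).swap by rw [Prod.swap_neg]; abel]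
  simp only [map_zero, smul_zero, sub_zero, one_smul, neg_one_smul, ← sub_eq_add_neg,
    sub_right_comm]

theorem reducedLaw_third (hswap : ∀ v ≠ 0, g v.swap = (g v).swap) (hu : Nondegenerate u) :
    (2 : ℝ) • rot ((1 : ℝ) • g (c + u.swap - (c + u)) + (1 : ℝ) • g (c + u.swap - (c - u))
        + (-1 : ℝ) • g (c + u.swap - (c - u.swap)))
      - (4 * Real.pi) • rot (c + u + (c - u) - (c + u.swap) - (c - u.swap))
      = (quadVelocity g u).swap := by
  rw [← neg_neg (quadVelocity g u).swap, ← quadVelocity_swap hswap hu, quadVelocity,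
    ansatz_weighted_sum_eq_zero, show c + u.swap - (c - u.swap) = 2 • u.swap by module,
    add_sub_add_left_eq_sub, add_sub_sub_cancel, Prod.swap_swap]
  simp only [map_zero, smul_zero, sub_zero, one_smul, neg_one_smul, ← sub_eq_add_neg, map_sub,
    smul_sub, map_add, smul_add]
  abel

theorem reducedLaw_fourth (hodd : ∀ v ≠ 0, g (-v) = -g v) (hswap : ∀ v ≠ 0, g v.swap = (g v).swap)
    (hu : Nondegenerate u) :
    (2 : ℝ) • rot ((1 : ℝ) • g (c - u.swap - (c + u)) + (1 : ℝ) • g (c - u.swap - (c - u))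
        + (-1 : ℝ) • g (c - u.swap - (c + u.swap)))
      - (4 * Real.pi) • rot (c + u + (c - u) - (c + u.swap) - (c - u.swap))
      = -(quadVelocity g u).swap := by
  rw [← quadVelocity_swap hswap hu, ← neg_neg (quadVelocity g u.swap),
    ← quadVelocity_neg hodd hu.swap, quadVelocity, ansatz_weighted_sum_eq_zero,
    show c - u.swap - (c + u.swap) = 2 • -u.swap by module,
    show c - u.swap - (c + u) = -u.swap + (-u.swap).swap by
      rw [Prod.swap_neg, Prod.swap_swap]; abel,
    show c - u.swap - (c - u) = -u.swap - (-u.swap).swap by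
      rw [Prod.swap_neg, Prod.swap_swap]; abel]
  simp only [map_zero, smul_zero, sub_zero, one_smul, neg_one_smul, ← sub_eq_add_neg, map_sub,
    smul_sub, map_add, smul_add]
  abel

end reducedLaw

end FourVortex

open FourVortex

theorem stmt_18_general (F : ℝ × ℝ → ℝ)
    (hFsym : ∀ x y : ℝ, (x, y) ≠ (0, 0) →
      F (-x, y) = F (x, y) ∧ F (x, -y) = F (x, y) ∧ F (y, x) = F (x, y))
    (hFdiff : ∀ x : ℝ × ℝ, x ≠ 0 → ContDiffAt ℝ 1 F x)
    (Jmat : ℝ × ℝ → ℝ × ℝ) (hJ : Jmat = fun v => (v.2, -v.1))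
    (gF : ℝ × ℝ → ℝ × ℝ)
    (hgF : gF = fun x => (fderiv ℝ F x ((1:ℝ), (0:ℝ)), fderiv ℝ F x ((0:ℝ), (1:ℝ))))
    (α β : ℝ → ℝ) (α₀ β₀ : ℝ) (hα0 : α 0 = α₀) (hβ0 : β 0 = β₀)
    (hnd : ∀ t : ℝ, (α t, β t) ≠ (0, 0) ∧ α t ≠ β t ∧ α t + β t ≠ 0)
    (hαODE : ∀ t : ℝ, HasDerivAt α
      (2 * (-(gF (α t - β t, β t - α t)).2 + (gF (2 * α t, 2 * β t)).2
        - (gF (α t + β t, α t + β t)).2)) t)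
    (hβODE : ∀ t : ℝ, HasDerivAt β
      (2 * ((gF (α t - β t, β t - α t)).1 - (gF (2 * α t, 2 * β t)).1
        + (gF (α t + β t, α t + β t)).1)) t)
    (c : ℝ × ℝ)
    (a1 a2 a3 a4 : ℝ → ℝ × ℝ)
    (ha1 : a1 = fun t => c + (α t, β t)) (ha2 : a2 = fun t => c - (α t, β t))
    (ha3 : a3 = fun t => c + (β t, α t)) (ha4 : a4 = fun t => c - (β t, α t)) :
    a1 0 = c + (α₀, β₀) ∧ a2 0 = c - (α₀, β₀) ∧ a3 0 = c + (β₀, α₀) ∧ a4 0 = c - (β₀, α₀) ∧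
    (∀ t : ℝ, HasDerivAt a1
      ((2:ℝ) • Jmat ((1:ℝ) • gF (a1 t - a2 t) + (-1:ℝ) • gF (a1 t - a3 t)
          + (-1:ℝ) • gF (a1 t - a4 t))
        - (4 * Real.pi) • Jmat (a1 t + a2 t - a3 t - a4 t)) t) ∧
    (∀ t : ℝ, HasDerivAt a2
      ((2:ℝ) • Jmat ((1:ℝ) • gF (a2 t - a1 t) + (-1:ℝ) • gF (a2 t - a3 t)
          + (-1:ℝ) • gF (a2 t - a4 t))
        - (4 * Real.pi) • Jmat (a1 t + a2 t - a3 t - a4 t)) t) ∧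
    (∀ t : ℝ, HasDerivAt a3
      ((2:ℝ) • Jmat ((1:ℝ) • gF (a3 t - a1 t) + (1:ℝ) • gF (a3 t - a2 t)
          + (-1:ℝ) • gF (a3 t - a4 t))
        - (4 * Real.pi) • Jmat (a1 t + a2 t - a3 t - a4 t)) t) ∧
    (∀ t : ℝ, HasDerivAt a4
      ((2:ℝ) • Jmat ((1:ℝ) • gF (a4 t - a1 t) + (1:ℝ) • gF (a4 t - a2 t)
          + (-1:ℝ) • gF (a4 t - a3 t))
        - (4 * Real.pi) • Jmat (a1 t + a2 t - a3 t - a4 t)) t) := by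
  obtain rfl : Jmat = rot := hJ
  obtain rfl : gF = grad F := hgF
  subst ha1 ha2 ha3 ha4 hα0 hβ0
  have hdiff : ∀ p ≠ 0, DifferentiableAt ℝ F p :=
    fun p hp => (hFdiff p hp).differentiableAt one_ne_zero
  have hodd : ∀ v ≠ 0, grad F (-v) = -grad F v := fun v hv =>
    grad_neg (fun p hp => neg_eq_of_reflections (fun x y h => (hFsym x y h).1)
      (fun x y h => (hFsym x y h).2.1) hp) (hdiff _ (neg_ne_zero.2 hv)) hv
  have hswap : ∀ v ≠ 0, grad F v.swap = (grad F v).swap := fun v hv =>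
    grad_swap (fun p hp => (hFsym p.1 p.2 hp).2.2) (hdiff _ (Prod.swap_ne_zero hv)) hv
  have hu : ∀ t, HasDerivAt (fun s => (α s, β s)) (quadVelocity (grad F) (α t, β t)) t :=
    fun t => ((hαODE t).prodMk (hβODE t)).congr_deriv (by
      ext <;> simp [quadVelocity, rot, add_comm (β t) (α t)] <;> ring)
  refine ⟨rfl, rfl, rfl, rfl, fun t => ?_, fun t => ?_, fun t => ?_, fun t => ?_⟩
  · exact ((hu t).const_add c).congr_deriv (reducedLaw_first c (α t, β t)).symm
  · exact ((hu t).const_sub c).congr_deriv (reducedLaw_second hodd (hnd t)).symm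
  · exact (((hu t).prodSwap).const_add c).congr_deriv (reducedLaw_third hswap (hnd t)).symm
  · exact (((hu t).prodSwap).const_sub c).congr_deriv
      (reducedLaw_fourth hodd hswap (hnd t)).symm

/-- If `(α,β)` is a `C¹` solution of
`α̇ = 2(-∂_yF(α-β, β-α) + ∂_yF(2α,2β) - ∂_yF(α+β, α+β))`,
`β̇ = 2(∂_xF(α-β, β-α) - ∂_xF(2α,2β) + ∂_xF(α+β, α+β))` with data `(α₀,β₀)`,
then `a₁ = c+(α,β)`, `a₂ = c-(α,β)`, `a₃ = c+(β,α)`, `a₄ = c-(β,α)` with `c=(0.5,0.5)`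
solve the reduced dynamical law `ȧ_j = 2𝕁 Σ_{k≠j} d_k ∇F(a_j-a_k) - 4π𝕁 Σ_m d_m a_m`
with `d₁ = d₂ = 1`, `d₃ = d₄ = -1` and the corresponding initial data. -/
theorem stmt_18 (F : ℝ × ℝ → ℝ)
    (hFsym : ∀ x y : ℝ, (x, y) ≠ (0, 0) →
      F (-x, y) = F (x, y) ∧ F (x, -y) = F (x, y) ∧ F (y, x) = F (x, y))
    (hFdiff : ∀ x : ℝ × ℝ, x ≠ 0 → ContDiffAt ℝ 1 F x)
    (Jmat : ℝ × ℝ → ℝ × ℝ) (hJ : Jmat = fun v => (v.2, -v.1))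
    (gF : ℝ × ℝ → ℝ × ℝ)
    (hgF : gF = fun x => (fderiv ℝ F x ((1:ℝ), (0:ℝ)), fderiv ℝ F x ((0:ℝ), (1:ℝ))))
    (α β : ℝ → ℝ) (α₀ β₀ : ℝ) (hα0 : α 0 = α₀) (hβ0 : β 0 = β₀)
    (hnd : ∀ t : ℝ, (α t, β t) ≠ (0, 0) ∧ α t ≠ β t ∧ α t + β t ≠ 0)
    (hαODE : ∀ t : ℝ, HasDerivAt α
      (2 * (-(gF (α t - β t, β t - α t)).2 + (gF (2 * α t, 2 * β t)).2
        - (gF (α t + β t, α t + β t)).2)) t)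
    (hβODE : ∀ t : ℝ, HasDerivAt β
      (2 * ((gF (α t - β t, β t - α t)).1 - (gF (2 * α t, 2 * β t)).1
        + (gF (α t + β t, α t + β t)).1)) t)
    (c : ℝ × ℝ) (hc : c = (0.5, 0.5))
    (a1 a2 a3 a4 : ℝ → ℝ × ℝ)
    (ha1 : a1 = fun t => c + (α t, β t)) (ha2 : a2 = fun t => c - (α t, β t))
    (ha3 : a3 = fun t => c + (β t, α t)) (ha4 : a4 = fun t => c - (β t, α t)) :
    a1 0 = c + (α₀, β₀) ∧ a2 0 = c - (α₀, β₀) ∧ a3 0 = c + (β₀, α₀) ∧ a4 0 = c - (β₀, α₀) ∧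
    (∀ t : ℝ, HasDerivAt a1
      ((2:ℝ) • Jmat ((1:ℝ) • gF (a1 t - a2 t) + (-1:ℝ) • gF (a1 t - a3 t)
          + (-1:ℝ) • gF (a1 t - a4 t))
        - (4 * Real.pi) • Jmat (a1 t + a2 t - a3 t - a4 t)) t) ∧
    (∀ t : ℝ, HasDerivAt a2
      ((2:ℝ) • Jmat ((1:ℝ) • gF (a2 t - a1 t) + (-1:ℝ) • gF (a2 t - a3 t)
          + (-1:ℝ) • gF (a2 t - a4 t))
        - (4 * Real.pi) • Jmat (a1 t + a2 t - a3 t - a4 t)) t) ∧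
    (∀ t : ℝ, HasDerivAt a3
      ((2:ℝ) • Jmat ((1:ℝ) • gF (a3 t - a1 t) + (1:ℝ) • gF (a3 t - a2 t)
          + (-1:ℝ) • gF (a3 t - a4 t))
        - (4 * Real.pi) • Jmat (a1 t + a2 t - a3 t - a4 t)) t) ∧
    (∀ t : ℝ, HasDerivAt a4
      ((2:ℝ) • Jmat ((1:ℝ) • gF (a4 t - a1 t) + (1:ℝ) • gF (a4 t - a2 t)
          + (-1:ℝ) • gF (a4 t - a3 t))
        - (4 * Real.pi) • Jmat (a1 t + a2 t - a3 t - a4 t)) t) :=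
  stmt_18_general F hFsym hFdiff Jmat hJ gF hgF α β α₀ β₀ hα0 hβ0 hnd hαODE hβODE c a1 a2 a3 a4 ha1
    ha2 ha3 ha4
end
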